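/- There is no function w : [0,∞) → ℝ that is continuously differentiable on [0,∞), twice continuously differentiable on (0,∞), tends to 0 at +∞, and satisfies −ζ·w''(ζ) − w'(ζ)/(m−2) + (b(ζ) − σ₀)·w(ζ) = v_{σ₀}(ζ) for all ζ > 0; that is, the eigenvalue σ₀ has algebraic multiplicity one. -/

import Mathlib

/-!
With `a = 1/(m-2)` the equations read `ζ v₀'' + a v₀' = (b - σ₀) v₀` and
`ζ w'' + a w' = (b - σ₀) w - v₀`, so the weighted Wronskian `W = ζ^a (v₀ w' - w v₀')` satisfies
`W' = -ζ^(a-1) v₀² < 0`. Since `v₀, w` are `C¹` up to `0`, `W(0⁺) = 0`, hence `W ≤ -δ < 0` on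
`[1, ∞)`. Once `|v₀|, |w| ≤ 1` this gives `(w/v₀)' ≤ -δ ζ^(-a)`, and `ζ^(-a)` is not integrable
at infinity because `a < 1` (i.e. `m > 3`): so `w/v₀ → -∞` and `w < 0` eventually. The same
estimate for `-v₀/w`, which is then positive, forces `-v₀/w → -∞` as well, a contradiction.
-/

open Filter Set

/-- A regular solution of the singular ODE
`-ζ·v'' - v'/(m-2) + B·ζ^{m/(m-2)}·v = σ·v` on `(0,∞)`:
continuously differentiable on `[0,∞)`, twice continuously differentiable on
`(0,∞)`, and normalized by `v 0 = 1`. -/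
def RegSol (m B σ : ℝ) (v : ℝ → ℝ) : Prop :=
  ContDiffOn ℝ 1 v (Set.Ici 0) ∧
  ContDiffOn ℝ 2 v (Set.Ioi 0) ∧
  (∀ ζ : ℝ, 0 < ζ →
    -ζ * deriv (deriv v) ζ - deriv v ζ / (m - 2)
      + B * ζ ^ (m / (m - 2)) * v ζ = σ * v ζ) ∧
  v 0 = 1

open Topology

theorem StrictAntiOn.lt_of_tendsto_nhdsGT {f : ℝ → ℝ} {a L x : ℝ} (hf : StrictAntiOn f (Ioi a))
    (hlim : Tendsto f (𝓝[>] a) (𝓝 L)) (hx : a < x) : f x < L := by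
  obtain ⟨y, hay, hyx⟩ := exists_between hx
  have hy : f y ≤ L := ge_of_tendsto hlim <| by
    filter_upwards [Ioo_mem_nhdsGT hay] with t ht using (hf ht.1 hay ht.2).le
  exact (hf hay hx hyx).trans_le hy

theorem ContDiffOn.hasDerivAt_deriv {f : ℝ → ℝ} {s : Set ℝ} {x : ℝ} (hf : ContDiffOn ℝ 2 f s)
    (hs : IsOpen s) (hx : x ∈ s) : HasDerivAt (deriv f) (deriv (deriv f) x) x :=
  ((hf.deriv_of_isOpen hs (by norm_num : (1 : WithTop ℕ∞) + 1 ≤ 2)).differentiableOn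
    one_ne_zero).hasDerivAt (hs.mem_nhds hx)

theorem tendsto_atBot_of_hasDerivAt_le_neg {h h' Φ φ : ℝ → ℝ}
    (hh : ∀ᶠ x in atTop, HasDerivAt h (h' x) x) (hΦ : ∀ᶠ x in atTop, HasDerivAt Φ (φ x) x)
    (hle : ∀ᶠ x in atTop, h' x ≤ -φ x) (hΦ_top : Tendsto Φ atTop atTop) :
    Tendsto h atTop atBot := by
  obtain ⟨Z, hZ⟩ := eventually_atTop.mp (hh.and (hΦ.and hle))
  have hsum : ∀ x ≥ Z, HasDerivAt (h + Φ) (h' x + φ x) x :=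
    fun x hx => (hZ x hx).1.add (hZ x hx).2.1
  have hanti : AntitoneOn (h + Φ) (Ici Z) := by
    refine antitoneOn_of_deriv_nonpos (convex_Ici Z)
      (fun x hx => (hsum x hx).continuousAt.continuousWithinAt)
      (fun x hx => (hsum x (interior_subset hx)).differentiableAt.differentiableWithinAt)
      fun x hx => ?_
    rw [(hsum x (interior_subset hx)).deriv]
    linarith [(hZ x (interior_subset hx)).2.2]
  have hbound : ∀ x ≥ Z, h x ≤ (h Z + Φ Z) - Φ x := fun x hx => by
    have := hanti self_mem_Ici hx hx
    simp only [Pi.add_apply] at this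
    linarith
  exact tendsto_atBot_mono' atTop (eventually_atTop.mpr ⟨Z, hbound⟩)
    (tendsto_atBot_add_const_left _ _ (tendsto_neg_atTop_atBot.comp hΦ_top))

theorem tendsto_div_atBot_of_wronskian_le {f g f' g' : ℝ → ℝ} {a δ : ℝ} (ha : a < 1)
    (hδ : 0 < δ) (hf : ∀ᶠ x in atTop, HasDerivAt f (f' x) x)
    (hg : ∀ᶠ x in atTop, HasDerivAt g (g' x) x) (hg_ne : ∀ᶠ x in atTop, g x ≠ 0)
    (hg_le : ∀ᶠ x in atTop, |g x| ≤ 1)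
    (hW : ∀ᶠ x in atTop, x ^ a * (g x * f' x - f x * g' x) ≤ -δ) :
    Tendsto (fun x => f x / g x) atTop atBot := by
  have h1a : 0 < 1 - a := sub_pos.mpr ha
  refine tendsto_atBot_of_hasDerivAt_le_neg (Φ := fun x => δ / (1 - a) * x ^ (1 - a))
    (φ := fun x => δ * x ^ (-a))
    (by filter_upwards [hf, hg, hg_ne] with x hfx hgx hgx_ne using hfx.div hgx hgx_ne)
    ?_ ?_ ((tendsto_rpow_atTop h1a).const_mul_atTop (div_pos hδ h1a))
  · filter_upwards [eventually_gt_atTop 0] with x hx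
    refine ((Real.hasDerivAt_rpow_const (p := 1 - a) (Or.inl hx.ne')).const_mul
      (δ / (1 - a))).congr_deriv ?_
    rw [sub_sub_cancel_left]
    field_simp
  · filter_upwards [eventually_gt_atTop 0, hg_ne, hg_le, hW] with x hx hgx_ne hgx_le hWx
    have hW' : g x * f' x - f x * g' x ≤ -δ * x ^ (-a) := by
      rw [Real.rpow_neg hx.le, ← div_eq_mul_inv, le_div_iff₀ (by positivity)]
      linarith
    have hg2 : g x ^ 2 ≤ 1 := by
      rw [← sq_abs]; exact pow_le_one₀ (abs_nonneg _) hgx_le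
    have hφ : 0 ≤ δ * x ^ (-a) := by positivity
    rw [div_le_iff₀ (by positivity)]
    nlinarith

theorem not_tendsto_zero_of_wronskian_le {v w v' w' : ℝ → ℝ} {a δ : ℝ} (ha : a < 1)
    (hδ : 0 < δ) (hv : ∀ᶠ x in atTop, HasDerivAt v (v' x) x)
    (hw : ∀ᶠ x in atTop, HasDerivAt w (w' x) x) (hv_pos : ∀ᶠ x in atTop, 0 < v x)
    (hv_lim : Tendsto v atTop (𝓝 0))
    (hW : ∀ᶠ x in atTop, x ^ a * (v x * w' x - w x * v' x) ≤ -δ) :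
    ¬ Tendsto w atTop (𝓝 0) := by
  intro hw_lim
  have hsmall : ∀ {u : ℝ → ℝ}, Tendsto u atTop (𝓝 0) → ∀ᶠ x in atTop, |u x| ≤ 1 :=
    fun hu => by simpa using hu.eventually (Metric.closedBall_mem_nhds 0 one_pos)
  have hw_neg : ∀ᶠ x in atTop, w x < 0 := by
    filter_upwards [(tendsto_div_atBot_of_wronskian_le ha hδ hw hv
      (hv_pos.mono fun _ h => h.ne') (hsmall hv_lim) hW).eventually_lt_atBot 0, hv_pos]
      with x hx hvx using neg_of_div_neg_left hx hvx.le
  have hv_div : Tendsto (fun x => -v x / w x) atTop atBot :=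
    tendsto_div_atBot_of_wronskian_le (f' := fun x => -v' x) ha hδ
      (hv.mono fun _ h => h.neg) hw (hw_neg.mono fun _ h => h.ne) (hsmall hw_lim)
      (hW.mono fun x h => by convert h using 2; ring)
  obtain ⟨x, hx_neg, hvx, hwx⟩ :=
    ((hv_div.eventually_lt_atBot 0).and (hv_pos.and hw_neg)).exists
  exact hx_neg.not_gt (div_pos_of_neg_of_neg (neg_neg_of_pos hvx) hwx)

noncomputable def weightedWronskian (a : ℝ) (v w : ℝ → ℝ) (ζ : ℝ) : ℝ :=
  ζ ^ a * (v ζ * deriv w ζ - w ζ * deriv v ζ)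

section weightedWronskian

variable {a : ℝ} {v w : ℝ → ℝ}

theorem hasDerivAt_weightedWronskian {c ζ : ℝ} (hζ : 0 < ζ)
    (hv : ContDiffOn ℝ 2 v (Ioi 0)) (hw : ContDiffOn ℝ 2 w (Ioi 0))
    (hv_eq : ζ * deriv (deriv v) ζ + a * deriv v ζ = c * v ζ)
    (hw_eq : ζ * deriv (deriv w) ζ + a * deriv w ζ = c * w ζ - v ζ) :
    HasDerivAt (weightedWronskian a v w) (-(ζ ^ (a - 1) * v ζ ^ 2)) ζ := by
  have hv' := (hv.differentiableOn two_ne_zero).hasDerivAt (Ioi_mem_nhds hζ)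
  have hw' := (hw.differentiableOn two_ne_zero).hasDerivAt (Ioi_mem_nhds hζ)
  refine ((Real.hasDerivAt_rpow_const (p := a) (Or.inl hζ.ne')).mul
    ((hv'.mul (hw.hasDerivAt_deriv isOpen_Ioi hζ)).sub
      (hw'.mul (hv.hasDerivAt_deriv isOpen_Ioi hζ)))).congr_deriv ?_
  have hpow : ζ ^ a = ζ ^ (a - 1) * ζ := by rw [Real.rpow_sub_one hζ.ne']; field_simp
  simp only [Pi.mul_apply, Pi.sub_apply]
  rw [hpow]
  linear_combination ζ ^ (a - 1) * (v ζ * hw_eq - w ζ * hv_eq)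

theorem tendsto_weightedWronskian_nhdsGT_zero (ha : 0 < a)
    (hv : ContDiffOn ℝ 1 v (Ici 0)) (hw : ContDiffOn ℝ 1 w (Ici 0)) :
    Tendsto (weightedWronskian a v w) (𝓝[>] 0) (𝓝 0) := by
  have hdv := hv.continuousOn_derivWithin (uniqueDiffOn_Ici 0) le_rfl
  have hdw := hw.continuousOn_derivWithin (uniqueDiffOn_Ici 0) le_rfl
  have hbracket : ContinuousWithinAt (fun ζ => v ζ * derivWithin w (Ici 0) ζ
      - w ζ * derivWithin v (Ici 0) ζ) (Ioi 0) 0 :=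
    (((hv.continuousOn.mul hdw).sub (hw.continuousOn.mul hdv)) 0 self_mem_Ici).mono
      Ioi_subset_Ici_self
  have hpow : Tendsto (fun ζ : ℝ => ζ ^ a) (𝓝[>] 0) (𝓝 0) := by
    have := ((Real.continuousAt_rpow_const 0 a (Or.inr ha.le)).continuousWithinAt
      (s := Ioi 0)).tendsto
    rwa [Real.zero_rpow ha.ne'] at this
  refine (zero_mul (_ : ℝ) ▸ hpow.mul hbracket.tendsto).congr' ?_
  filter_upwards [self_mem_nhdsWithin] with ζ (hζ : 0 < ζ)
  simp only [weightedWronskian, derivWithin_of_mem_nhds (Ici_mem_nhds hζ)]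

theorem exists_weightedWronskian_le_neg {c : ℝ → ℝ} (ha : 0 < a)
    (hv₁ : ContDiffOn ℝ 1 v (Ici 0)) (hw₁ : ContDiffOn ℝ 1 w (Ici 0))
    (hv₂ : ContDiffOn ℝ 2 v (Ioi 0)) (hw₂ : ContDiffOn ℝ 2 w (Ioi 0))
    (hv_ne : ∀ ζ > 0, v ζ ≠ 0)
    (hv_eq : ∀ ζ > 0, ζ * deriv (deriv v) ζ + a * deriv v ζ = c ζ * v ζ)
    (hw_eq : ∀ ζ > 0, ζ * deriv (deriv w) ζ + a * deriv w ζ = c ζ * w ζ - v ζ) :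
    ∃ δ > 0, ∀ᶠ ζ in atTop, weightedWronskian a v w ζ ≤ -δ := by
  have hW : ∀ ζ > 0, HasDerivAt (weightedWronskian a v w) (-(ζ ^ (a - 1) * v ζ ^ 2)) ζ :=
    fun ζ hζ => hasDerivAt_weightedWronskian hζ hv₂ hw₂ (hv_eq ζ hζ) (hw_eq ζ hζ)
  have hanti : StrictAntiOn (weightedWronskian a v w) (Ioi 0) := by
    refine strictAntiOn_of_deriv_neg (convex_Ioi 0)
      (fun ζ hζ => (hW ζ hζ).continuousAt.continuousWithinAt) fun ζ hζ => ?_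
    rw [interior_Ioi] at hζ
    have hvζ := hv_ne ζ hζ
    have hζ' : (0 : ℝ) < ζ := hζ
    rw [(hW ζ hζ).deriv, neg_lt_zero]
    positivity
  refine ⟨-weightedWronskian a v w 1,
    neg_pos.mpr (hanti.lt_of_tendsto_nhdsGT (tendsto_weightedWronskian_nhdsGT_zero ha hv₁ hw₁)
      one_pos), ?_⟩
  filter_upwards [eventually_ge_atTop 1] with ζ hζ
  rw [neg_neg]
  exact hanti.antitoneOn (mem_Ioi.mpr one_pos) (mem_Ioi.mpr (one_pos.trans_le hζ)) hζ

end weightedWronskian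

theorem stmt17_general (m B σ₀ : ℝ) (hm : 3 < m)
    (v₀ : ℝ → ℝ) (h₀ : RegSol m B σ₀ v₀)
    (hpos : ∀ ζ : ℝ, 0 ≤ ζ → 0 < v₀ ζ)
    (hdecay : Filter.Tendsto v₀ Filter.atTop (nhds 0)) :
    ¬ ∃ w : ℝ → ℝ,
      ContDiffOn ℝ 1 w (Set.Ici 0) ∧
      ContDiffOn ℝ 2 w (Set.Ioi 0) ∧
      (∀ ζ : ℝ, 0 < ζ →
        -ζ * deriv (deriv w) ζ - deriv w ζ / (m - 2)
          + (B * ζ ^ (m / (m - 2)) - σ₀) * w ζ = v₀ ζ) ∧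
      Filter.Tendsto w Filter.atTop (nhds 0) := by
  rintro ⟨w, hw₁, hw₂, hw_eq, hw_lim⟩
  obtain ⟨hv₁, hv₂, hv_eq, -⟩ := h₀
  have ha : 0 < (m - 2)⁻¹ ∧ (m - 2)⁻¹ < 1 :=
    ⟨inv_pos.mpr (by linarith), inv_lt_one_of_one_lt₀ (by linarith)⟩
  obtain ⟨δ, hδ, hW⟩ := exists_weightedWronskian_le_neg
    (c := fun ζ => B * ζ ^ (m / (m - 2)) - σ₀) ha.1 hv₁ hw₁ hv₂ hw₂
    (fun ζ hζ => (hpos ζ hζ.le).ne')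
    (fun ζ hζ => by linear_combination -hv_eq ζ hζ) (fun ζ hζ => by linear_combination -hw_eq ζ hζ)
  have hderiv : ∀ {f : ℝ → ℝ}, ContDiffOn ℝ 2 f (Ioi 0) →
      ∀ᶠ ζ in atTop, HasDerivAt f (deriv f ζ) ζ := fun hf =>
    (eventually_gt_atTop 0).mono fun _ hζ => (hf.differentiableOn two_ne_zero).hasDerivAt
      (Ioi_mem_nhds hζ)
  exact not_tendsto_zero_of_wronskian_le ha.2 hδ (hderiv hv₂) (hderiv hw₂)
    (eventually_atTop.mpr ⟨0, hpos⟩) hdecay hW hw_lim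

theorem stmt17 (m B σ₀ : ℝ) (hm : 3 < m) (hB : 0 < B) (hσ₀ : 0 < σ₀)
    (v₀ : ℝ → ℝ) (h₀ : RegSol m B σ₀ v₀)
    (hpos : ∀ ζ : ℝ, 0 ≤ ζ → 0 < v₀ ζ)
    (hdecay : Filter.Tendsto v₀ Filter.atTop (nhds 0)) :
    ¬ ∃ w : ℝ → ℝ,
      ContDiffOn ℝ 1 w (Set.Ici 0) ∧
      ContDiffOn ℝ 2 w (Set.Ioi 0) ∧
      (∀ ζ : ℝ, 0 < ζ →
        -ζ * deriv (deriv w) ζ - deriv w ζ / (m - 2)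
          + (B * ζ ^ (m / (m - 2)) - σ₀) * w ζ = v₀ ζ) ∧
      Filter.Tendsto w Filter.atTop (nhds 0) :=
  stmt17_general m B σ₀ hm v₀ h₀ hpos hdecay
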